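/- Let Γ be a group, K a normal subgroup of finite index, R a finite set of coset representatives, and E an equivalence relation on X. The map f : (X^R)^K → X^Γ defined by f(x)(γ·a) = x(γ)(a) is a homomorphism from the jump equivalence relation (E^R)^[K] to the jump E^[Γ]: if there exists ζ ∈ K such that ζ·x is (E^R)^K-related to y, then there exists δ ∈ Γ such that δ·f(x) is E^Γ-related to f(y). -/

import Mathlib

theorem Subgroup.coset_decomposition_mul_left {Γ : Type*} [Group Γ] {K : Subgroup Γ} {R : Set Γ}
    {κ : Γ → K} {ρ : Γ → R} (hdec : ∀ γ : Γ, (κ γ : Γ) * (ρ γ : Γ) = γ)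
    (huniq : ∀ (k : K) (a : R), κ ((k : Γ) * (a : Γ)) = k ∧ ρ ((k : Γ) * (a : Γ)) = a)
    (ζ : K) (γ : Γ) : κ (ζ * γ) = ζ * κ γ ∧ ρ (ζ * γ) = ρ γ := by
  have hζγ : ((ζ * κ γ : K) : Γ) * (ρ γ : Γ) = ζ * γ := by
    rw [Subgroup.coe_mul, mul_assoc, hdec γ]
  simpa only [hζγ] using huniq (ζ * κ γ) (ρ γ)

theorem stmt1_general {Γ X : Type*} [Group Γ] (K : Subgroup Γ)
    (R : Set Γ) (E : X → X → Prop)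
    (κ : Γ → K) (ρ : Γ → R)
    (hdec : ∀ γ : Γ, ((κ γ : Γ) * (ρ γ : Γ) = γ))
    (huniq : ∀ (k : K) (a : R), κ ((k : Γ) * (a : Γ)) = k ∧ ρ ((k : Γ) * (a : Γ)) = a)
    (f : (K → R → X) → (Γ → X))
    (hf : ∀ (x : K → R → X) (γ : Γ), f x γ = x (κ γ) (ρ γ))
    (x y : K → R → X)
    (hxy : ∃ ζ : K, ∀ (γ : K) (a : R), E (x (ζ⁻¹ * γ) a) (y γ a)) :
    ∃ δ : Γ, ∀ γ : Γ, E (f x (δ⁻¹ * γ)) (f y γ) := by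
  obtain ⟨ζ, hζ⟩ := hxy
  refine ⟨ζ, fun γ => ?_⟩
  obtain ⟨hκ, hρ⟩ := Subgroup.coset_decomposition_mul_left hdec huniq ζ⁻¹ γ
  rw [Subgroup.coe_inv] at hκ hρ
  rw [hf, hf, hκ, hρ]
  exact hζ (κ γ) (ρ γ)

/-- The coset-decomposition map `f` is a homomorphism from the jump
`(E^R)^[K]` to the jump `E^[Γ]`. -/
theorem stmt1 {Γ X : Type*} [Group Γ] (K : Subgroup Γ) [K.Normal] (hK : K.index ≠ 0)
    (R : Set Γ) (hR : R.Finite) (E : X → X → Prop) (hE : Equivalence E)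
    (κ : Γ → K) (ρ : Γ → R)
    (hdec : ∀ γ : Γ, ((κ γ : Γ) * (ρ γ : Γ) = γ))
    (huniq : ∀ (k : K) (a : R), κ ((k : Γ) * (a : Γ)) = k ∧ ρ ((k : Γ) * (a : Γ)) = a)
    (f : (K → R → X) → (Γ → X))
    (hf : ∀ (x : K → R → X) (γ : Γ), f x γ = x (κ γ) (ρ γ))
    (x y : K → R → X)
    (hxy : ∃ ζ : K, ∀ (γ : K) (a : R), E (x (ζ⁻¹ * γ) a) (y γ a)) :
    ∃ δ : Γ, ∀ γ : Γ, E (f x (δ⁻¹ * γ)) (f y γ) :=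
  stmt1_general K R E κ ρ hdec huniq f hf x y hxy
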